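/- Let ζ ∈ ℂ with ζ² = −3. Then the point p = (3:3:ζ:ζ) is a singular point of the quartic surface W = {H = 0}: H(3,3,ζ,ζ) = 0 and all four partial derivatives ∂H/∂y₀, ∂H/∂y₁, ∂H/∂y₂, ∂H/∂y₃ vanish at (3,3,ζ,ζ). -/

import Mathlib

open MvPolynomial

/-- The quartic polynomial `H` defining the surface `W ⊂ ℙ³`, as an element of
`ℂ[y₀,y₁,y₂,y₃]`. -/
noncomputable def H : MvPolynomial (Fin 4) ℂ :=
  5 * X 0 ^ 4 + 6 * X 0 ^ 2 * (X 1 ^ 2 + X 2 ^ 2 + X 3 ^ 2) -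
    27 * (X 1 ^ 4 + X 2 ^ 4 + X 3 ^ 4) -
    90 * (X 1 ^ 2 * X 2 ^ 2 + X 1 ^ 2 * X 3 ^ 2 + X 2 ^ 2 * X 3 ^ 2) +
    72 * (X 0 * X 1 * X 2 * X 3)

@[simp]
theorem Derivation.map_ofNat {R A M : Type*} [CommSemiring R] [CommSemiring A] [AddCommMonoid M]
    [Algebra R A] [Module A M] [Module R M] (D : Derivation R A M) (n : ℕ) [n.AtLeastTwo] :
    D (ofNat(n) : A) = 0 := by
  rw [← Nat.cast_ofNat]
  exact D.map_natCast n

theorem pderiv_zero_H : pderiv 0 H =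
    20 * X 0 ^ 3 + 12 * X 0 * (X 1 ^ 2 + X 2 ^ 2 + X 3 ^ 2) + 72 * (X 1 * X 2 * X 3) := by
  simp only [H, map_add, map_sub, Derivation.leibniz, Derivation.leibniz_pow,
    Derivation.map_ofNat, pderiv_X, Pi.single_eq_same, Pi.single_eq_of_ne, ne_eq, Fin.reduceEq,
    not_false_eq_true, smul_eq_mul, nsmul_eq_mul]
  ring

theorem pderiv_one_H : pderiv 1 H =
    12 * X 0 ^ 2 * X 1 - 108 * X 1 ^ 3 - 180 * X 1 * (X 2 ^ 2 + X 3 ^ 2) +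
      72 * (X 0 * X 2 * X 3) := by
  simp only [H, map_add, map_sub, Derivation.leibniz, Derivation.leibniz_pow,
    Derivation.map_ofNat, pderiv_X, Pi.single_eq_same, Pi.single_eq_of_ne, ne_eq, Fin.reduceEq,
    not_false_eq_true, smul_eq_mul, nsmul_eq_mul]
  ring

theorem pderiv_two_H : pderiv 2 H =
    12 * X 0 ^ 2 * X 2 - 108 * X 2 ^ 3 - 180 * X 2 * (X 1 ^ 2 + X 3 ^ 2) +
      72 * (X 0 * X 1 * X 3) := by
  simp only [H, map_add, map_sub, Derivation.leibniz, Derivation.leibniz_pow,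
    Derivation.map_ofNat, pderiv_X, Pi.single_eq_same, Pi.single_eq_of_ne, ne_eq, Fin.reduceEq,
    not_false_eq_true, smul_eq_mul, nsmul_eq_mul]
  ring

theorem pderiv_three_H : pderiv 3 H =
    12 * X 0 ^ 2 * X 3 - 108 * X 3 ^ 3 - 180 * X 3 * (X 1 ^ 2 + X 2 ^ 2) +
      72 * (X 0 * X 1 * X 2) := by
  simp only [H, map_add, map_sub, Derivation.leibniz, Derivation.leibniz_pow,
    Derivation.map_ofNat, pderiv_X, Pi.single_eq_same, Pi.single_eq_of_ne, ne_eq, Fin.reduceEq,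
    not_false_eq_true, smul_eq_mul, nsmul_eq_mul]
  ring

/-- For `ζ ∈ ℂ` with `ζ² = −3`, the point `p = (3:3:ζ:ζ)` is a singular point of
`W = {H = 0}`: `H(3,3,ζ,ζ) = 0` and all four partial derivatives
`∂H/∂y₀, ∂H/∂y₁, ∂H/∂y₂, ∂H/∂y₃` vanish at `(3,3,ζ,ζ)`. -/
theorem singular_point_of_W (ζ : ℂ) (hζ : ζ ^ 2 = -3) :
    eval ![3, 3, ζ, ζ] H = 0 ∧ ∀ i : Fin 4, eval ![3, 3, ζ, ζ] (pderiv i H) = 0 := by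
  -- Each value is a polynomial in `ζ` divisible by `ζ ^ 2 + 3`; the coefficients are the cofactors.
  refine ⟨?_, fun i => ?_⟩
  · simp only [H, map_add, map_sub, map_mul, map_pow, eval_ofNat, eval_X, Matrix.cons_val_zero,
      Matrix.cons_val_one, Matrix.cons_val]
    linear_combination (-144 * (ζ ^ 2 + 3)) * hζ
  · fin_cases i <;>
      simp only [Fin.zero_eta, Fin.mk_one, Fin.reduceFinMk, pderiv_zero_H, pderiv_one_H,
        pderiv_two_H, pderiv_three_H, map_add, map_sub, map_mul, map_pow, eval_ofNat, eval_X,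
        Matrix.cons_val_zero, Matrix.cons_val_one, Matrix.cons_val]
    · linear_combination 288 * hζ
    · linear_combination -864 * hζ
    · linear_combination -288 * ζ * hζ
    · linear_combination -288 * ζ * hζ
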